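/- arXiv:2405.10238 — 2 statements merged into one kernel-verified Lean document; each statement's English description precedes it below -/
import Mathlib

section
/- Let G be a simple d-regular graph (d ≥ 1) on a finite vertex set V of size n ≥ 1, let ε > 0 and C ≥ 16 be real numbers, and suppose that for every subset S ⊆ V the number e(S, V∖S) of edges of G with exactly one endpoint in S satisfies e(S, V∖S) ≥ C·ε·d·|S|·(n−|S|)/n. Then for any two independent sets I₁, I₂ of G, each of size at least (1/2 − ε)·n, either |I₁ ∩ I₂| + |V∖(I₁ ∪ I₂)| ≤ (4/C)·n, or |I₁ ∩ I₂| ≥ (1/2 − 2/C − ε)·n. -/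
/-!
Put `A = I₁ ∩ I₂`, `B = (I₁ ∪ I₂)ᶜ` and `S = A ∪ B`. Every neighbour of a vertex of `A` lies in
`B`, so each edge leaving `S` starts in `B`, and `B` also sends `d * #A` edges back into `A`; hence
`e(S, Sᶜ) ≤ d (#B - #A) = d (n - #I₁ - #I₂) ≤ 2 ε d n`. Expansion turns this into
`C #S (n - #S) ≤ 2 n²`, so either `#S ≤ 4n/C` or `n - #S ≤ 4n/C`; in the second case
`2 #A = #S - (#B - #A)` gives the lower bound on `#A`.
-/

open Finset

/-- Number of edges of `G` with exactly one endpoint in `S` (counted via the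
orientation whose first coordinate lies in `S`). -/
def crossCount {V : Type*} [Fintype V] [DecidableEq V] (G : SimpleGraph V)
    [DecidableRel G.Adj] (S : Finset V) : ℕ :=
  (Finset.univ.filter (fun p : V × V => G.Adj p.1 p.2 ∧ p.1 ∈ S ∧ p.2 ∉ S)).card

namespace SimpleGraph

lemma mem_compl_union_of_adj_of_mem_inter {V : Type*} [Fintype V] [DecidableEq V]
    (G : SimpleGraph V) {I₁ I₂ : Finset V}
    (h₁ : ∀ u ∈ I₁, ∀ v ∈ I₁, ¬ G.Adj u v) (h₂ : ∀ u ∈ I₂, ∀ v ∈ I₂, ¬ G.Adj u v) :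
    ∀ a ∈ I₁ ∩ I₂, ∀ w, G.Adj a w → w ∈ (I₁ ∪ I₂)ᶜ := by
  intro a ha w haw
  rw [mem_inter] at ha
  rw [mem_compl, mem_union]
  rintro (hw | hw)
  exacts [h₁ a ha.1 w hw haw, h₂ a ha.2 w hw haw]

variable {V : Type*} [Fintype V] (G : SimpleGraph V) [DecidableRel G.Adj]

lemma crossCount_eq_card_interedges [DecidableEq V] (S : Finset V) :
    crossCount G S = #(G.interedges S Sᶜ) := by
  unfold crossCount
  congr 1
  ext ⟨v, w⟩
  simp only [mem_filter, mem_univ, true_and, mk_mem_interedges_iff, mem_compl]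
  tauto

lemma card_interedges_univ_right (s : Finset V) :
    #(G.interedges s univ) = ∑ v ∈ s, G.degree v := by
  simp only [interedges_def, card_filter, sum_product, ← card_neighborFinset_eq_degree,
    neighborFinset_eq_filter]

variable {G}

lemma IsRegularOfDegree.card_interedges_univ_right {d : ℕ} (hreg : G.IsRegularOfDegree d)
    (s : Finset V) : #(G.interedges s univ) = #s * d := by
  rw [G.card_interedges_univ_right, sum_const_nat fun v _ => hreg v]

theorem IsRegularOfDegree.crossCount_union_add_le [DecidableEq V] {d : ℕ}
    (hreg : G.IsRegularOfDegree d) {A B : Finset V}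
    (hA : ∀ a ∈ A, ∀ w, G.Adj a w → w ∈ B) :
    crossCount G (A ∪ B) + #A * d ≤ #B * d := by
  have hout : G.interedges (A ∪ B) (A ∪ B)ᶜ = G.interedges B (A ∪ B)ᶜ := by
    ext ⟨v, w⟩
    simp only [mk_mem_interedges_iff, mem_union, mem_compl]
    constructor
    · rintro ⟨hA' | hB, hw, hvw⟩
      · exact absurd (Or.inr (hA v hA' w hvw)) hw
      · exact ⟨hB, hw, hvw⟩
    · exact fun ⟨hB, hw, hvw⟩ => ⟨Or.inr hB, hw, hvw⟩
  have hinto : G.interedges A univ = G.interedges A B := by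
    ext ⟨v, w⟩
    simp only [mk_mem_interedges_iff, mem_univ, true_and]
    exact ⟨fun ⟨hv, hvw⟩ => ⟨hv, hA v hv w hvw, hvw⟩, fun ⟨hv, _, hvw⟩ => ⟨hv, hvw⟩⟩
  have hdisj : Disjoint (G.interedges B (A ∪ B)ᶜ) (G.interedges B A) :=
    G.interedges_disjoint_right B (disjoint_compl_left.mono_right subset_union_left)
  calc crossCount G (A ∪ B) + #A * d
      = #(G.interedges B (A ∪ B)ᶜ ∪ G.interedges B A) := by
        rw [card_union_of_disjoint hdisj, crossCount_eq_card_interedges, hout,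
          ← hreg.card_interedges_univ_right, hinto]
        have := G.symm
        exact congrArg _ (Rel.card_interedges_comm A B)
    _ ≤ #(G.interedges B univ) :=
        card_le_card (union_subset (G.interedges_mono subset_rfl (subset_univ _))
          (G.interedges_mono subset_rfl (subset_univ _)))
    _ = #B * d := hreg.card_interedges_univ_right B

end SimpleGraph

lemma le_or_sub_le_of_mul_mul_sub_le {C n s : ℝ} (hC : 0 < C) (hs : 0 ≤ s) (hsn : s ≤ n)
    (h : C * s * (n - s) ≤ 2 * n ^ 2) : s ≤ 4 / C * n ∨ n - s ≤ 4 / C * n := by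
  rw [div_mul_eq_mul_div, le_div_iff₀ hC, le_div_iff₀ hC]
  rcases (hs.trans hsn).eq_or_lt with rfl | hn
  · obtain rfl := le_antisymm hsn hs
    simp
  rcases le_total s (n / 2) with hs2 | hs2
  · left
    have : C * s * (n / 2) ≤ C * s * (n - s) := by gcongr; linarith
    nlinarith
  · right
    have : C * (n - s) * (n / 2) ≤ C * s * (n - s) := by
      rw [mul_right_comm]; gcongr
    nlinarith

lemma Finset.card_compl_union_add_card_add_card {α : Type*} [Fintype α] [DecidableEq α]
    (s t : Finset α) : #(s ∪ t)ᶜ + #s + #t = Fintype.card α + #(s ∩ t) := by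
  have := card_union_add_card_inter s t
  have := card_le_univ (s ∪ t)
  rw [card_compl]
  omega

theorem two_indep_sets_dichotomy
    {V : Type*} [Fintype V] [DecidableEq V]
    (G : SimpleGraph V) [DecidableRel G.Adj]
    (d n : ℕ) (hd : 1 ≤ d) (hreg : G.IsRegularOfDegree d)
    (hn : n = Fintype.card V) (hn1 : 1 ≤ n)
    (ε C : ℝ) (hε : 0 < ε) (hC : 16 ≤ C)
    (hexp : ∀ S : Finset V,
      C * ε * d * (S.card : ℝ) * ((n : ℝ) - S.card) / n ≤ (crossCount G S : ℝ))
    (I₁ I₂ : Finset V)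
    (h₁ : ∀ u ∈ I₁, ∀ v ∈ I₁, ¬ G.Adj u v)
    (h₂ : ∀ u ∈ I₂, ∀ v ∈ I₂, ¬ G.Adj u v)
    (hs₁ : ((1 : ℝ)/2 - ε) * n ≤ (I₁.card : ℝ))
    (hs₂ : ((1 : ℝ)/2 - ε) * n ≤ (I₂.card : ℝ)) :
    ((I₁ ∩ I₂).card : ℝ) + (((I₁ ∪ I₂)ᶜ).card : ℝ) ≤ (4/C) * n ∨
      ((1 : ℝ)/2 - 2/C - ε) * n ≤ ((I₁ ∩ I₂).card : ℝ) := by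
  set A := I₁ ∩ I₂
  set B := (I₁ ∪ I₂)ᶜ
  have hAB : Disjoint A B :=
    disjoint_compl_right.mono_left (inter_subset_left.trans subset_union_left)
  have hcross : (crossCount G (A ∪ B) : ℝ) + #A * d ≤ #B * d := by
    exact_mod_cast hreg.crossCount_union_add_le (G.mem_compl_union_of_adj_of_mem_inter h₁ h₂)
  have hS : (#(A ∪ B) : ℝ) = #A + #B := by exact_mod_cast card_union_of_disjoint hAB
  have hcount : (#B : ℝ) + #I₁ + #I₂ = n + #A := by
    rw [hn]; exact_mod_cast card_compl_union_add_card_add_card I₁ I₂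
  have hSn : (#(A ∪ B) : ℝ) ≤ n := by rw [hn]; exact_mod_cast card_le_univ _
  have hn0 : (0 : ℝ) < n := by exact_mod_cast hn1
  have hεd : 0 < ε * d := mul_pos hε (by exact_mod_cast hd)
  have hkey : C * #(A ∪ B) * (n - #(A ∪ B)) ≤ 2 * (n : ℝ) ^ 2 := by
    have hcut : (crossCount G (A ∪ B) : ℝ) ≤ 2 * ε * n * d := by
      have : (#B : ℝ) - #A ≤ 2 * ε * n := by linarith
      linarith [mul_le_mul_of_nonneg_right this (Nat.cast_nonneg d)]
    have h := (hexp (A ∪ B)).trans hcut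
    rw [div_le_iff₀ hn0] at h
    refine le_of_mul_le_mul_left ?_ hεd
    linarith
  rcases le_or_sub_le_of_mul_mul_sub_le (by linarith) (Nat.cast_nonneg _) hSn hkey with h | h
  · left; linarith
  · right
    linarith [show 4 / C * (n : ℝ) = 2 * (2 / C * n) by ring]
end

section
/- Let G be a simple d-regular graph (d ≥ 1) on a finite vertex set V of size n ≥ 1, let ε be a real with 0 < ε ≤ 0.001, and suppose that for every subset S ⊆ V the number e(S, V∖S) of edges of G with exactly one endpoint in S satisfies e(S, V∖S) ≥ (1/(1+ε))·d·|S|·(n−|S|)/n. Let c₁, c₂, c₃ : V → {1,2,3} be three proper 3-colorings of G such that for each k and each color σ ∈ {1,2,3}, |{u : c_k(u) = σ}| ≤ (1/2 + ε)·n. Then there exist k ≠ l in {1,2,3} and a permutation π of {1,2,3} such that |{u ∈ V : c_l(u) = π(c_k(u))}| ≥ (1/2 + ε)·n. -/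
set_option linter.unusedSectionVars false
set_option linter.unusedVariables false
set_option linter.unusedTactic false

open Finset

/-- ordered pairs of adjacent vertices inside `S` -/
def e2 {V : Type*} [Fintype V] [DecidableEq V] (G : SimpleGraph V)
    [DecidableRel G.Adj] (S : Finset V) : ℕ :=
  (Finset.univ.filter (fun p : V × V => G.Adj p.1 p.2 ∧ p.1 ∈ S ∧ p.2 ∈ S)).card

section GraphAux
variable {V : Type*} [Fintype V] [DecidableEq V] (G : SimpleGraph V) [DecidableRel G.Adj]

lemma filter_adj_card (S : Finset V) (d : ℕ) (hreg : G.IsRegularOfDegree d) :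
    (univ.filter (fun p : V × V => G.Adj p.1 p.2 ∧ p.1 ∈ S)).card = d * S.card := by
  rw [Finset.card_filter]
  rw [Fintype.sum_prod_type]
  have h1 : ∀ u : V, (∑ v : V, if G.Adj u v ∧ u ∈ S then 1 else 0) =
      if u ∈ S then d else 0 := by
    intro u
    by_cases hu : u ∈ S
    · simp only [hu, and_true, if_true]
      have : (∑ v : V, if G.Adj u v then 1 else 0) = G.degree u := by
        rw [← Finset.card_filter]
        rw [SimpleGraph.degree, SimpleGraph.neighborFinset_eq_filter]
      rw [this, hreg u]
    · simp [hu]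
  simp only [h1]
  rw [Finset.sum_ite_mem, Finset.univ_inter, Finset.sum_const, smul_eq_mul, mul_comm]

lemma cross_add_e2 (S : Finset V) (d : ℕ) (hreg : G.IsRegularOfDegree d) :
    crossCount G S + e2 G S = d * S.card := by
  rw [← filter_adj_card G S d hreg, crossCount, e2, Finset.card_filter, Finset.card_filter,
    Finset.card_filter, ← Finset.sum_add_distrib]
  apply Finset.sum_congr rfl
  intro p _
  by_cases h1 : G.Adj p.1 p.2 <;> by_cases h2 : p.1 ∈ S <;> by_cases h3 : p.2 ∈ S <;>
    simp [h1, h2, h3]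

lemma perm_count_two : ∀ (x y : Fin 3),
    (univ.filter (fun π : Equiv.Perm (Fin 3) => y = π x)).card = 2 := by decide

lemma perm_count_one : ∀ (x x' y y' : Fin 3), x ≠ x' → y ≠ y' →
    (univ.filter (fun π : Equiv.Perm (Fin 3) => y = π x ∧ y' = π x')).card = 1 := by decide

/-- every edge lies in exactly one agreement set -/
lemma sum_e2_agree (d : ℕ) (hreg : G.IsRegularOfDegree d) (a b : V → Fin 3)
    (hpa : ∀ u v : V, G.Adj u v → a u ≠ a v) (hpb : ∀ u v : V, G.Adj u v → b u ≠ b v) :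
    ∑ π : Equiv.Perm (Fin 3), e2 G (univ.filter (fun u => b u = π (a u)))
      = d * Fintype.card V := by
  have hrw : ∀ π : Equiv.Perm (Fin 3), e2 G (univ.filter (fun u => b u = π (a u)))
      = ∑ p : V × V, if G.Adj p.1 p.2 ∧ (b p.1 = π (a p.1) ∧ b p.2 = π (a p.2))
          then 1 else 0 := by
    intro π
    rw [e2, Finset.card_filter]
    apply Finset.sum_congr rfl; intro p _
    simp [mem_filter]
  simp only [hrw]
  rw [Finset.sum_comm]
  have h2 : ∀ p : V × V, (∑ π : Equiv.Perm (Fin 3),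
      if G.Adj p.1 p.2 ∧ (b p.1 = π (a p.1) ∧ b p.2 = π (a p.2)) then 1 else 0)
      = if G.Adj p.1 p.2 ∧ p.1 ∈ (univ : Finset V) then 1 else 0 := by
    intro p
    by_cases hadj : G.Adj p.1 p.2
    · simp only [hadj, true_and, if_true, mem_univ]
      rw [← Finset.card_filter]
      exact perm_count_one _ _ _ _ (hpa _ _ hadj) (hpb _ _ hadj)
    · simp [hadj]
  simp only [h2]
  rw [← Finset.card_filter, filter_adj_card G univ d hreg, Finset.card_univ]

/-- every vertex lies in exactly two agreement sets -/
lemma sum_card_agree (a b : V → Fin 3) :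
    ∑ π : Equiv.Perm (Fin 3), (univ.filter (fun u => b u = π (a u))).card
      = 2 * Fintype.card V := by
  simp only [Finset.card_filter]
  rw [Finset.sum_comm]
  have h2 : ∀ u : V, (∑ π : Equiv.Perm (Fin 3),
      if b u = π (a u) then 1 else 0) = 2 := by
    intro u
    rw [← Finset.card_filter]
    exact perm_count_two _ _
  simp only [h2]
  rw [Finset.sum_const, Finset.card_univ, smul_eq_mul, mul_comm]

/-- decomposition of an agreement set by the colour of `a` -/
lemma trace_eq (a b : V → Fin 3) (π : Equiv.Perm (Fin 3)) :
    (univ.filter (fun u => b u = π (a u))).card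
      = (univ.filter (fun u => a u = 0 ∧ b u = π 0)).card
      + (univ.filter (fun u => a u = 1 ∧ b u = π 1)).card
      + (univ.filter (fun u => a u = 2 ∧ b u = π 2)).card := by
  have key : ∀ i : Fin 3,
      ((univ.filter (fun u => b u = π (a u))).filter (fun u => a u = i))
        = univ.filter (fun u => a u = i ∧ b u = π i) := by
    intro i
    rw [Finset.filter_filter]
    apply Finset.ext
    intro u
    simp only [mem_filter, mem_univ, true_and]
    constructor
    · rintro ⟨h1, h2⟩; exact ⟨h2, by rw [← h2]; exact h1⟩
    · rintro ⟨h1, h2⟩; exact ⟨by rw [h1]; exact h2, h1⟩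
  rw [Finset.card_eq_sum_card_fiberwise (f := fun u => a u) (t := univ)
    (fun x _ => mem_univ _)]
  rw [Fin.sum_univ_three, key 0, key 1, key 2]

lemma row_eq (a b : V → Fin 3) (i : Fin 3) :
    (univ.filter (fun u => a u = i)).card
      = (univ.filter (fun u => a u = i ∧ b u = 0)).card
      + (univ.filter (fun u => a u = i ∧ b u = 1)).card
      + (univ.filter (fun u => a u = i ∧ b u = 2)).card := by
  have key : ∀ j : Fin 3,
      ((univ.filter (fun u => a u = i)).filter (fun u => b u = j))
        = univ.filter (fun u => a u = i ∧ b u = j) := by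
    intro j; rw [Finset.filter_filter]
  rw [Finset.card_eq_sum_card_fiberwise (f := fun u => b u) (t := univ)
    (fun x _ => mem_univ _)]
  rw [Fin.sum_univ_three, key 0, key 1, key 2]

lemma col_eq (a b : V → Fin 3) (j : Fin 3) :
    (univ.filter (fun u => b u = j)).card
      = (univ.filter (fun u => a u = 0 ∧ b u = j)).card
      + (univ.filter (fun u => a u = 1 ∧ b u = j)).card
      + (univ.filter (fun u => a u = 2 ∧ b u = j)).card := by
  have key : ∀ i : Fin 3,
      ((univ.filter (fun u => b u = j)).filter (fun u => a u = i))
        = univ.filter (fun u => a u = i ∧ b u = j) := by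
    intro i
    rw [Finset.filter_filter]
    apply Finset.ext; intro u
    simp only [mem_filter, mem_univ, true_and, and_comm]
  rw [Finset.card_eq_sum_card_fiberwise (f := fun u => a u) (t := univ)
    (fun x _ => mem_univ _)]
  rw [Fin.sum_univ_three, key 0, key 1, key 2]

lemma tot_eq (a : V → Fin 3) :
    Fintype.card V
      = (univ.filter (fun u : V => a u = 0)).card
      + (univ.filter (fun u : V => a u = 1)).card
      + (univ.filter (fun u : V => a u = 2)).card := by
  rw [← Finset.card_univ,
    Finset.card_eq_sum_card_fiberwise (f := fun u => a u) (t := univ) (fun x _ => mem_univ _),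
    Fin.sum_univ_three]

end GraphAux

set_option maxHeartbeats 4000000

lemma fin3_forall_ne {P : Fin 3 → Prop} (σ : Fin 3)
    (h0 : (0 : Fin 3) ≠ σ → P 0) (h1 : (1 : Fin 3) ≠ σ → P 1) (h2 : (2 : Fin 3) ≠ σ → P 2) :
    ∀ i : Fin 3, i ≠ σ → P i := by
  intro i hi
  fin_cases i
  · exact h0 hi
  · exact h1 hi
  · exact h2 hi

lemma quadBound (n ε t1 t2 t3 t4 t5 t6 : ℝ) (hn0 : 0 < n) (hε0 : 0 < ε)
    (hp2 : 0 ≤ t2) (hp3 : 0 ≤ t3) (hp4 : 0 ≤ t4) (hp5 : 0 ≤ t5) (hp6 : 0 ≤ t6)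
    (hc2 : t2 ≤ (1/2+ε)*n) (hc3 : t3 ≤ (1/2+ε)*n)
    (hc4 : t4 ≤ (1/2+ε)*n) (hc5 : t5 ≤ (1/2+ε)*n) (hc6 : t6 ≤ (1/2+ε)*n)
    (hS : t1 + t2 + t3 + t4 + t5 + t6 = 2*n)
    (hQ : t1*(n-t1) + t2*(n-t2) + t3*(n-t3) + t4*(n-t4) + t5*(n-t5) + t6*(n-t6) ≤ (1+ε)*n^2) :
    t1*((1/2+ε)*n - t1) ≤ 3*ε*n^2 := by
  have hh2 : 0 ≤ t2*((1/2+ε)*n - t2) := mul_nonneg hp2 (by linarith)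
  have hh3 : 0 ≤ t3*((1/2+ε)*n - t3) := mul_nonneg hp3 (by linarith)
  have hh4 : 0 ≤ t4*((1/2+ε)*n - t4) := mul_nonneg hp4 (by linarith)
  have hh5 : 0 ≤ t5*((1/2+ε)*n - t5) := mul_nonneg hp5 (by linarith)
  have hh6 : 0 ≤ t6*((1/2+ε)*n - t6) := mul_nonneg hp6 (by linarith)
  have hSn : n*(t1+t2+t3+t4+t5+t6) = 2*n^2 := by linear_combination n*hS
  have hSen : ε*n*(t1+t2+t3+t4+t5+t6) = 2*ε*n^2 := by linear_combination ε*n*hS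
  linarith [hQ, hh2, hh3, hh4, hh5, hh6, hSn, hSen]

lemma dicho (n ε t : ℝ) (hn0 : 0 < n) (hε0 : 0 < ε) (hε1 : ε ≤ 0.001)
    (hq : t*((1/2+ε)*n - t) ≤ 3*ε*n^2) :
    t ≤ 8*ε*n ∨ (1/2-7*ε)*n ≤ t := by
  by_contra hcc
  push_neg at hcc
  obtain ⟨h1, h2⟩ := hcc
  nlinarith [hq, mul_pos (sub_pos.mpr h1) (sub_pos.mpr h2),
    mul_pos (mul_pos hε0 hn0) hn0, hε1, hn0]

lemma oneSmall (n ε a b c : ℝ) (hn0 : 0 < n) (hε0 : 0 < ε) (hε1 : ε ≤ 0.001)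
    (hsum : a + b + c = n)
    (hca : a ≤ (1/2+ε)*n) (hcb : b ≤ (1/2+ε)*n) (hcc : c ≤ (1/2+ε)*n)
    (hda : a ≤ 8*ε*n ∨ (1/2-7*ε)*n ≤ a)
    (hdb : b ≤ 8*ε*n ∨ (1/2-7*ε)*n ≤ b)
    (hdc : c ≤ 8*ε*n ∨ (1/2-7*ε)*n ≤ c) :
    (a ≤ 8*ε*n ∧ (1/2-7*ε)*n ≤ b ∧ (1/2-7*ε)*n ≤ c)
    ∨ (b ≤ 8*ε*n ∧ (1/2-7*ε)*n ≤ a ∧ (1/2-7*ε)*n ≤ c)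
    ∨ (c ≤ 8*ε*n ∧ (1/2-7*ε)*n ≤ a ∧ (1/2-7*ε)*n ≤ b) := by
  have hεn : ε*n ≤ 0.001*n := mul_le_mul_of_nonneg_right hε1 (by linarith)
  rcases hda with h1 | h1 <;> rcases hdb with h2 | h2 <;> rcases hdc with h3 | h3
  · exfalso; linarith
  · exfalso; linarith
  · exfalso; linarith
  · exact Or.inl ⟨h1, h2, h3⟩
  · exfalso; linarith
  · exact Or.inr (Or.inl ⟨h2, h1, h3⟩)
  · exact Or.inr (Or.inr ⟨h3, h1, h2⟩)
  · exfalso; linarith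

lemma cellLemma (n ε : ℝ) (N : Fin 3 → Fin 3 → ℝ)
    (hn : 1 ≤ n) (hε0 : 0 < ε) (hε1 : ε ≤ 0.001)
    (hpos : ∀ i j : Fin 3, 0 ≤ N i j)
    (hrow : ∀ i : Fin 3, N i 0 + N i 1 + N i 2 ≤ (1/2+ε)*n)
    (hcol : ∀ j : Fin 3, N 0 j + N 1 j + N 2 j ≤ (1/2+ε)*n)
    (htot : N 0 0 + N 0 1 + N 0 2 + N 1 0 + N 1 1 + N 1 2 + N 2 0 + N 2 1 + N 2 2 = n)
    (hT : ∀ π : Equiv.Perm (Fin 3), N 0 (π 0) + N 1 (π 1) + N 2 (π 2) ≤ (1/2+ε)*n)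
    (hQs : ∑ π : Equiv.Perm (Fin 3),
       (N 0 (π 0) + N 1 (π 1) + N 2 (π 2)) * (n - (N 0 (π 0) + N 1 (π 1) + N 2 (π 2)))
       ≤ (1+ε)*n^2) :
    ∃ σ τ : Fin 3, (1/2-31*ε)*n ≤ N σ 0 + N σ 1 + N σ 2
      ∧ (∀ i : Fin 3, i ≠ σ → N i 0 + N i 1 + N i 2 ≤ (1/4+41*ε)*n)
      ∧ (1/2-31*ε)*n ≤ N 0 τ + N 1 τ + N 2 τ
      ∧ (∀ j : Fin 3, j ≠ τ → N 0 j + N 1 j + N 2 j ≤ (1/4+41*ε)*n)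
      ∧ N σ τ ≤ 8*ε*n := by
  have hn0 : (0:ℝ) < n := by linarith
  have hεn : ε*n ≤ 0.001*n := mul_le_mul_of_nonneg_right hε1 (by linarith)
  have huniv : (Finset.univ : Finset (Equiv.Perm (Fin 3)))
      = {1, finRotate 3, (finRotate 3)⁻¹, Equiv.swap 0 1, Equiv.swap 0 2, Equiv.swap 1 2} := by
    decide
  have E0 : ∀ x : Fin 3, (1 : Equiv.Perm (Fin 3)) x = x := fun _ => rfl
  have Er0 : (finRotate 3 : Equiv.Perm (Fin 3)) 0 = 1 := by decide
  have Er1 : (finRotate 3 : Equiv.Perm (Fin 3)) 1 = 2 := by decide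
  have Er2 : (finRotate 3 : Equiv.Perm (Fin 3)) 2 = 0 := by decide
  have Es0 : ((finRotate 3)⁻¹ : Equiv.Perm (Fin 3)) 0 = 2 := by decide
  have Es1 : ((finRotate 3)⁻¹ : Equiv.Perm (Fin 3)) 1 = 0 := by decide
  have Es2 : ((finRotate 3)⁻¹ : Equiv.Perm (Fin 3)) 2 = 1 := by decide
  have Ea0 : (Equiv.swap (0:Fin 3) 1) 0 = 1 := by decide
  have Ea1 : (Equiv.swap (0:Fin 3) 1) 1 = 0 := by decide
  have Ea2 : (Equiv.swap (0:Fin 3) 1) 2 = 2 := by decide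
  have Eb0 : (Equiv.swap (0:Fin 3) 2) 0 = 2 := by decide
  have Eb1 : (Equiv.swap (0:Fin 3) 2) 1 = 1 := by decide
  have Eb2 : (Equiv.swap (0:Fin 3) 2) 2 = 0 := by decide
  have Ec0 : (Equiv.swap (1:Fin 3) 2) 0 = 0 := by decide
  have Ec1 : (Equiv.swap (1:Fin 3) 2) 1 = 2 := by decide
  have Ec2 : (Equiv.swap (1:Fin 3) 2) 2 = 1 := by decide
  rw [huniv] at hQs
  rw [Finset.sum_insert (by decide), Finset.sum_insert (by decide),
    Finset.sum_insert (by decide), Finset.sum_insert (by decide),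
    Finset.sum_insert (by decide), Finset.sum_singleton] at hQs
  simp only [E0, Er0, Er1, Er2, Es0, Es1, Es2, Ea0, Ea1, Ea2, Eb0, Eb1, Eb2,
    Ec0, Ec1, Ec2] at hQs
  have hT1 := hT 1
  have hT2 := hT (finRotate 3)
  have hT3 := hT (finRotate 3)⁻¹
  have hT4 := hT (Equiv.swap 0 1)
  have hT5 := hT (Equiv.swap 0 2)
  have hT6 := hT (Equiv.swap 1 2)
  simp only [E0] at hT1
  simp only [Er0, Er1, Er2] at hT2
  simp only [Es0, Es1, Es2] at hT3
  simp only [Ea0, Ea1, Ea2] at hT4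
  simp only [Eb0, Eb1, Eb2] at hT5
  simp only [Ec0, Ec1, Ec2] at hT6
  clear hT
  have hp00 := hpos 0 0
  have hp01 := hpos 0 1
  have hp02 := hpos 0 2
  have hp10 := hpos 1 0
  have hp11 := hpos 1 1
  have hp12 := hpos 1 2
  have hp20 := hpos 2 0
  have hp21 := hpos 2 1
  have hp22 := hpos 2 2
  have hr0 := hrow 0
  have hc0 := hcol 0
  have hr1 := hrow 1
  have hc1 := hcol 1
  have hr2 := hrow 2
  have hc2 := hcol 2
  clear hpos hrow hcol
  have htn1 : (0:ℝ) ≤ N 0 0 + N 1 1 + N 2 2 := by linarith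
  have htn2 : (0:ℝ) ≤ N 0 1 + N 1 2 + N 2 0 := by linarith
  have htn3 : (0:ℝ) ≤ N 0 2 + N 1 0 + N 2 1 := by linarith
  have htn4 : (0:ℝ) ≤ N 0 1 + N 1 0 + N 2 2 := by linarith
  have htn5 : (0:ℝ) ≤ N 0 2 + N 1 1 + N 2 0 := by linarith
  have htn6 : (0:ℝ) ≤ N 0 0 + N 1 2 + N 2 1 := by linarith
  have hS : (N 0 0 + N 1 1 + N 2 2) + (N 0 1 + N 1 2 + N 2 0) + (N 0 2 + N 1 0 + N 2 1) + (N 0 1 + N 1 0 + N 2 2) + (N 0 2 + N 1 1 + N 2 0) + (N 0 0 + N 1 2 + N 2 1) = 2*n := by linarith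
  have hd1 := dicho n ε (N 0 0 + N 1 1 + N 2 2) hn0 hε0 hε1 (quadBound n ε (N 0 0 + N 1 1 + N 2 2) (N 0 1 + N 1 2 + N 2 0) (N 0 2 + N 1 0 + N 2 1) (N 0 1 + N 1 0 + N 2 2) (N 0 2 + N 1 1 + N 2 0) (N 0 0 + N 1 2 + N 2 1) hn0 hε0 htn2 htn3 htn4 htn5 htn6 hT2 hT3 hT4 hT5 hT6 (by linarith) (by linarith [hQs]))
  have hd2 := dicho n ε (N 0 1 + N 1 2 + N 2 0) hn0 hε0 hε1 (quadBound n ε (N 0 1 + N 1 2 + N 2 0) (N 0 0 + N 1 1 + N 2 2) (N 0 2 + N 1 0 + N 2 1) (N 0 1 + N 1 0 + N 2 2) (N 0 2 + N 1 1 + N 2 0) (N 0 0 + N 1 2 + N 2 1) hn0 hε0 htn1 htn3 htn4 htn5 htn6 hT1 hT3 hT4 hT5 hT6 (by linarith) (by linarith [hQs]))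
  have hd3 := dicho n ε (N 0 2 + N 1 0 + N 2 1) hn0 hε0 hε1 (quadBound n ε (N 0 2 + N 1 0 + N 2 1) (N 0 0 + N 1 1 + N 2 2) (N 0 1 + N 1 2 + N 2 0) (N 0 1 + N 1 0 + N 2 2) (N 0 2 + N 1 1 + N 2 0) (N 0 0 + N 1 2 + N 2 1) hn0 hε0 htn1 htn2 htn4 htn5 htn6 hT1 hT2 hT4 hT5 hT6 (by linarith) (by linarith [hQs]))
  have hd4 := dicho n ε (N 0 1 + N 1 0 + N 2 2) hn0 hε0 hε1 (quadBound n ε (N 0 1 + N 1 0 + N 2 2) (N 0 0 + N 1 1 + N 2 2) (N 0 1 + N 1 2 + N 2 0) (N 0 2 + N 1 0 + N 2 1) (N 0 2 + N 1 1 + N 2 0) (N 0 0 + N 1 2 + N 2 1) hn0 hε0 htn1 htn2 htn3 htn5 htn6 hT1 hT2 hT3 hT5 hT6 (by linarith) (by linarith [hQs]))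
  have hd5 := dicho n ε (N 0 2 + N 1 1 + N 2 0) hn0 hε0 hε1 (quadBound n ε (N 0 2 + N 1 1 + N 2 0) (N 0 0 + N 1 1 + N 2 2) (N 0 1 + N 1 2 + N 2 0) (N 0 2 + N 1 0 + N 2 1) (N 0 1 + N 1 0 + N 2 2) (N 0 0 + N 1 2 + N 2 1) hn0 hε0 htn1 htn2 htn3 htn4 htn6 hT1 hT2 hT3 hT4 hT6 (by linarith) (by linarith [hQs]))
  have hd6 := dicho n ε (N 0 0 + N 1 2 + N 2 1) hn0 hε0 hε1 (quadBound n ε (N 0 0 + N 1 2 + N 2 1) (N 0 0 + N 1 1 + N 2 2) (N 0 1 + N 1 2 + N 2 0) (N 0 2 + N 1 0 + N 2 1) (N 0 1 + N 1 0 + N 2 2) (N 0 2 + N 1 1 + N 2 0) hn0 hε0 htn1 htn2 htn3 htn4 htn5 hT1 hT2 hT3 hT4 hT5 (by linarith) (by linarith [hQs]))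
  clear hQs
  have hE := oneSmall n ε (N 0 0 + N 1 1 + N 2 2) (N 0 1 + N 1 2 + N 2 0) (N 0 2 + N 1 0 + N 2 1) hn0 hε0 hε1 (by linarith) hT1 hT2 hT3 hd1 hd2 hd3
  have hO := oneSmall n ε (N 0 1 + N 1 0 + N 2 2) (N 0 2 + N 1 1 + N 2 0) (N 0 0 + N 1 2 + N 2 1) hn0 hε0 hε1 (by linarith) hT4 hT5 hT6 hd4 hd5 hd6
  clear hd1 hd2 hd3 hd4 hd5 hd6
  rcases hE with ⟨hsE, hbE1, hbE2⟩ | ⟨hsE, hbE1, hbE2⟩ | ⟨hsE, hbE1, hbE2⟩ <;>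
    rcases hO with ⟨hsO, hbO1, hbO2⟩ | ⟨hsO, hbO1, hbO2⟩ | ⟨hsO, hbO1, hbO2⟩
  · -- E=t1, O=t4
    refine ⟨2, 2, by linarith, ?_, by linarith, ?_, by linarith⟩
    · exact fin3_forall_ne 2 (fun _ => by linarith) (fun _ => by linarith) (fun hne => absurd rfl hne)
    · exact fin3_forall_ne 2 (fun _ => by linarith) (fun _ => by linarith) (fun hne => absurd rfl hne)
  · -- E=t1, O=t5
    refine ⟨1, 1, by linarith, ?_, by linarith, ?_, by linarith⟩
    · exact fin3_forall_ne 1 (fun _ => by linarith) (fun hne => absurd rfl hne) (fun _ => by linarith)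
    · exact fin3_forall_ne 1 (fun _ => by linarith) (fun hne => absurd rfl hne) (fun _ => by linarith)
  · -- E=t1, O=t6
    refine ⟨0, 0, by linarith, ?_, by linarith, ?_, by linarith⟩
    · exact fin3_forall_ne 0 (fun hne => absurd rfl hne) (fun _ => by linarith) (fun _ => by linarith)
    · exact fin3_forall_ne 0 (fun hne => absurd rfl hne) (fun _ => by linarith) (fun _ => by linarith)
  · -- E=t2, O=t4
    refine ⟨0, 1, by linarith, ?_, by linarith, ?_, by linarith⟩
    · exact fin3_forall_ne 0 (fun hne => absurd rfl hne) (fun _ => by linarith) (fun _ => by linarith)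
    · exact fin3_forall_ne 1 (fun _ => by linarith) (fun hne => absurd rfl hne) (fun _ => by linarith)
  · -- E=t2, O=t5
    refine ⟨2, 0, by linarith, ?_, by linarith, ?_, by linarith⟩
    · exact fin3_forall_ne 2 (fun _ => by linarith) (fun _ => by linarith) (fun hne => absurd rfl hne)
    · exact fin3_forall_ne 0 (fun hne => absurd rfl hne) (fun _ => by linarith) (fun _ => by linarith)
  · -- E=t2, O=t6
    refine ⟨1, 2, by linarith, ?_, by linarith, ?_, by linarith⟩
    · exact fin3_forall_ne 1 (fun _ => by linarith) (fun hne => absurd rfl hne) (fun _ => by linarith)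
    · exact fin3_forall_ne 2 (fun _ => by linarith) (fun _ => by linarith) (fun hne => absurd rfl hne)
  · -- E=t3, O=t4
    refine ⟨1, 0, by linarith, ?_, by linarith, ?_, by linarith⟩
    · exact fin3_forall_ne 1 (fun _ => by linarith) (fun hne => absurd rfl hne) (fun _ => by linarith)
    · exact fin3_forall_ne 0 (fun hne => absurd rfl hne) (fun _ => by linarith) (fun _ => by linarith)
  · -- E=t3, O=t5
    refine ⟨0, 2, by linarith, ?_, by linarith, ?_, by linarith⟩
    · exact fin3_forall_ne 0 (fun hne => absurd rfl hne) (fun _ => by linarith) (fun _ => by linarith)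
    · exact fin3_forall_ne 2 (fun _ => by linarith) (fun _ => by linarith) (fun hne => absurd rfl hne)
  · -- E=t3, O=t6
    refine ⟨2, 1, by linarith, ?_, by linarith, ?_, by linarith⟩
    · exact fin3_forall_ne 2 (fun _ => by linarith) (fun _ => by linarith) (fun hne => absurd rfl hne)
    · exact fin3_forall_ne 1 (fun _ => by linarith) (fun hne => absurd rfl hne) (fun _ => by linarith)

lemma pairLemma {V : Type*} [Fintype V] [DecidableEq V] (G : SimpleGraph V) [DecidableRel G.Adj]
    (d n : ℕ) (hd : 1 ≤ d) (hreg : G.IsRegularOfDegree d)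
    (hn : n = Fintype.card V) (hn1 : 1 ≤ n)
    (ε : ℝ) (hε0 : 0 < ε) (hε1 : ε ≤ 0.001)
    (hexp : ∀ S : Finset V,
      (1/(1+ε)) * d * (S.card : ℝ) * ((n : ℝ) - S.card) / n ≤ (crossCount G S : ℝ))
    (a b : V → Fin 3)
    (hpa : ∀ u v : V, G.Adj u v → a u ≠ a v) (hpb : ∀ u v : V, G.Adj u v → b u ≠ b v)
    (hba : ∀ σ : Fin 3, ((univ.filter (fun u : V => a u = σ)).card : ℝ) ≤ (1/2+ε)*n)
    (hbb : ∀ σ : Fin 3, ((univ.filter (fun u : V => b u = σ)).card : ℝ) ≤ (1/2+ε)*n)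
    (hlow : ∀ π : Equiv.Perm (Fin 3),
      ((univ.filter (fun u : V => b u = π (a u))).card : ℝ) < (1/2+ε)*n) :
    ∃ σ τ : Fin 3,
      ((1/2-31*ε)*n ≤ ((univ.filter (fun u : V => a u = σ)).card : ℝ))
      ∧ (∀ i : Fin 3, i ≠ σ → ((univ.filter (fun u : V => a u = i)).card : ℝ) ≤ (1/4+41*ε)*n)
      ∧ ((1/2-31*ε)*n ≤ ((univ.filter (fun u : V => b u = τ)).card : ℝ))
      ∧ (∀ j : Fin 3, j ≠ τ → ((univ.filter (fun u : V => b u = j)).card : ℝ) ≤ (1/4+41*ε)*n)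
      ∧ ((univ.filter (fun u : V => a u = σ ∧ b u = τ)).card : ℝ) ≤ 8*ε*n := by
  have hn0 : (0:ℝ) < n := by exact_mod_cast Nat.lt_of_lt_of_le Nat.zero_lt_one hn1
  have hn1R : (1:ℝ) ≤ n := by exact_mod_cast hn1
  have hd0 : (0:ℝ) < d := by exact_mod_cast Nat.lt_of_lt_of_le Nat.zero_lt_one hd
  have h1e : (0:ℝ) < 1 + ε := by linarith
  set NN : Fin 3 → Fin 3 → ℝ :=
    fun i j => ((univ.filter (fun u : V => a u = i ∧ b u = j)).card : ℝ) with hNN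
  have hsπ : ∀ π : Equiv.Perm (Fin 3),
      ((univ.filter (fun u : V => b u = π (a u))).card : ℝ)
        = NN 0 (π 0) + NN 1 (π 1) + NN 2 (π 2) := by
    intro π
    simp only [hNN]
    rw [trace_eq a b π]
    push_cast
    ring
  have hQ : ∑ π : Equiv.Perm (Fin 3),
      (NN 0 (π 0) + NN 1 (π 1) + NN 2 (π 2)) * ((n:ℝ) - (NN 0 (π 0) + NN 1 (π 1) + NN 2 (π 2)))
      ≤ (1+ε)*(n:ℝ)^2 := by
    have hcrossb : ∀ π ∈ (univ : Finset (Equiv.Perm (Fin 3))),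
        ((e2 G (univ.filter (fun u : V => b u = π (a u))) : ℝ))
        ≤ (d:ℝ) * ((univ.filter (fun u : V => b u = π (a u))).card : ℝ)
          - ((1/(1+ε))*(d:ℝ)/(n:ℝ)) *
            (((univ.filter (fun u : V => b u = π (a u))).card : ℝ)
              * ((n:ℝ) - ((univ.filter (fun u : V => b u = π (a u))).card : ℝ))) := by
      intro π _
      have hce := cross_add_e2 G (univ.filter (fun u : V => b u = π (a u))) d hreg
      have hceR : (crossCount G (univ.filter (fun u : V => b u = π (a u))) : ℝ)
          + (e2 G (univ.filter (fun u : V => b u = π (a u))) : ℝ)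
          = (d:ℝ) * ((univ.filter (fun u : V => b u = π (a u))).card : ℝ) := by
        exact_mod_cast hce
      have hex := hexp (univ.filter (fun u : V => b u = π (a u)))
      have heq : (1/(1+ε)) * (d:ℝ) * ((univ.filter (fun u : V => b u = π (a u))).card : ℝ)
            * ((n:ℝ) - ((univ.filter (fun u : V => b u = π (a u))).card : ℝ)) / n
          = ((1/(1+ε))*(d:ℝ)/(n:ℝ)) *
            (((univ.filter (fun u : V => b u = π (a u))).card : ℝ)
              * ((n:ℝ) - ((univ.filter (fun u : V => b u = π (a u))).card : ℝ))) := by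
        ring
      rw [heq] at hex
      linarith
    have hsumle := Finset.sum_le_sum hcrossb
    rw [Finset.sum_sub_distrib, ← Finset.mul_sum, ← Finset.mul_sum] at hsumle
    have hL : ∑ π : Equiv.Perm (Fin 3),
        ((e2 G (univ.filter (fun u : V => b u = π (a u))) : ℝ)) = (d:ℝ) * n := by
      have h := sum_e2_agree G d hreg a b hpa hpb
      rw [← hn] at h
      exact_mod_cast h
    have hs2 : ∑ π : Equiv.Perm (Fin 3),
        ((univ.filter (fun u : V => b u = π (a u))).card : ℝ) = 2*(n:ℝ) := by
      have h := sum_card_agree (V := V) a b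
      rw [← hn] at h
      exact_mod_cast h
    rw [hL, hs2] at hsumle
    have hK0 : (0:ℝ) < (1/(1+ε))*(d:ℝ)/(n:ℝ) :=
      div_pos (mul_pos (div_pos one_pos h1e) hd0) hn0
    have hKey : ((1/(1+ε))*(d:ℝ)/(n:ℝ)) * ((1+ε)*(n:ℝ)^2) = (d:ℝ)*n := by
      field_simp
    have hX : ((1/(1+ε))*(d:ℝ)/(n:ℝ)) * (∑ π : Equiv.Perm (Fin 3),
        ((univ.filter (fun u : V => b u = π (a u))).card : ℝ)
          * ((n:ℝ) - ((univ.filter (fun u : V => b u = π (a u))).card : ℝ)))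
        ≤ (d:ℝ) * n := by linarith
    have hQle : (∑ π : Equiv.Perm (Fin 3),
        ((univ.filter (fun u : V => b u = π (a u))).card : ℝ)
          * ((n:ℝ) - ((univ.filter (fun u : V => b u = π (a u))).card : ℝ)))
        ≤ (1+ε)*(n:ℝ)^2 := by
      have h2 : ((1/(1+ε))*(d:ℝ)/(n:ℝ)) * (∑ π : Equiv.Perm (Fin 3),
          ((univ.filter (fun u : V => b u = π (a u))).card : ℝ)
            * ((n:ℝ) - ((univ.filter (fun u : V => b u = π (a u))).card : ℝ)))
          ≤ ((1/(1+ε))*(d:ℝ)/(n:ℝ)) * ((1+ε)*(n:ℝ)^2) := by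
        rw [hKey]; exact hX
      exact le_of_mul_le_mul_left h2 hK0
    calc ∑ π : Equiv.Perm (Fin 3),
        (NN 0 (π 0) + NN 1 (π 1) + NN 2 (π 2)) * ((n:ℝ) - (NN 0 (π 0) + NN 1 (π 1) + NN 2 (π 2)))
          = ∑ π : Equiv.Perm (Fin 3),
        ((univ.filter (fun u : V => b u = π (a u))).card : ℝ)
          * ((n:ℝ) - ((univ.filter (fun u : V => b u = π (a u))).card : ℝ)) := by
            apply Finset.sum_congr rfl
            intro π _
            rw [hsπ π]
      _ ≤ (1+ε)*(n:ℝ)^2 := hQle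
  have htN : (univ.filter (fun u : V => a u = 0 ∧ b u = 0)).card
      + (univ.filter (fun u : V => a u = 0 ∧ b u = 1)).card
      + (univ.filter (fun u : V => a u = 0 ∧ b u = 2)).card
      + (univ.filter (fun u : V => a u = 1 ∧ b u = 0)).card
      + (univ.filter (fun u : V => a u = 1 ∧ b u = 1)).card
      + (univ.filter (fun u : V => a u = 1 ∧ b u = 2)).card
      + (univ.filter (fun u : V => a u = 2 ∧ b u = 0)).card
      + (univ.filter (fun u : V => a u = 2 ∧ b u = 1)).card
      + (univ.filter (fun u : V => a u = 2 ∧ b u = 2)).card = n := by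
    have h := tot_eq (V := V) a
    rw [row_eq a b 0, row_eq a b 1, row_eq a b 2] at h
    rw [← hn] at h
    omega
  obtain ⟨σ, τ, h1, h2, h3, h4, h5⟩ := cellLemma (n:ℝ) ε NN hn1R hε0 hε1
    (by intro i j; simp only [hNN]; positivity)
    (by intro i
        have hb := hba i
        rw [row_eq a b i] at hb
        push_cast at hb
        simp only [hNN]; push_cast; linarith)
    (by intro j
        have hb := hbb j
        rw [col_eq a b j] at hb
        push_cast at hb
        simp only [hNN]; push_cast; linarith)
    (by simp only [hNN]; exact_mod_cast htN)
    (by intro π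
        have hl := hlow π
        rw [hsπ π] at hl
        linarith)
    hQ
  refine ⟨σ, τ, ?_, ?_, ?_, ?_, ?_⟩
  · rw [row_eq a b σ]; push_cast
    simp only [hNN] at h1; push_cast at h1; linarith
  · intro i hi
    have h := h2 i hi
    rw [row_eq a b i]; push_cast
    simp only [hNN] at h; push_cast at h; linarith
  · rw [col_eq a b τ]; push_cast
    simp only [hNN] at h3; push_cast at h3; linarith
  · intro j hj
    have h := h4 j hj
    rw [col_eq a b j]; push_cast
    simp only [hNN] at h; push_cast at h; linarith
  · simp only [hNN] at h5; exact h5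

theorem three_colorings_two_agree
    {V : Type*} [Fintype V] [DecidableEq V]
    (G : SimpleGraph V) [DecidableRel G.Adj]
    (d n : ℕ) (hd : 1 ≤ d) (hreg : G.IsRegularOfDegree d)
    (hn : n = Fintype.card V) (hn1 : 1 ≤ n)
    (ε : ℝ) (hε0 : 0 < ε) (hε1 : ε ≤ 0.001)
    (hexp : ∀ S : Finset V,
      (1/(1+ε)) * d * (S.card : ℝ) * ((n : ℝ) - S.card) / n ≤ (crossCount G S : ℝ))
    (c : Fin 3 → V → Fin 3)
    (hproper : ∀ k : Fin 3, ∀ u v : V, G.Adj u v → c k u ≠ c k v)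
    (hbalanced : ∀ k : Fin 3, ∀ σ : Fin 3,
      ((Finset.univ.filter (fun u : V => c k u = σ)).card : ℝ) ≤ (1/2 + ε) * n) :
    ∃ k l : Fin 3, k ≠ l ∧ ∃ π : Equiv.Perm (Fin 3),
      (1/2 + ε) * n ≤
        ((Finset.univ.filter (fun u : V => c l u = π (c k u))).card : ℝ) := by
  by_contra hcon
  push_neg at hcon
  have hn0 : (0:ℝ) < n := by exact_mod_cast Nat.lt_of_lt_of_le Nat.zero_lt_one hn1
  have hεn : ε*(n:ℝ) ≤ 0.001*(n:ℝ) := mul_le_mul_of_nonneg_right hε1 (by linarith)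
  obtain ⟨σ01, τ01, hA1, hA2, hB1, hB2, hI01⟩ :=
    pairLemma G d n hd hreg hn hn1 ε hε0 hε1 hexp (c 0) (c 1)
      (hproper 0) (hproper 1) (hbalanced 0) (hbalanced 1)
      (fun π => hcon 0 1 (by decide) π)
  obtain ⟨σ02, τ02, hC1, hC2, hD1, hD2, hI02⟩ :=
    pairLemma G d n hd hreg hn hn1 ε hε0 hε1 hexp (c 0) (c 2)
      (hproper 0) (hproper 2) (hbalanced 0) (hbalanced 2)
      (fun π => hcon 0 2 (by decide) π)
  obtain ⟨σ12, τ12, hE1, hE2, hF1, hF2, hI12⟩ :=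
    pairLemma G d n hd hreg hn hn1 ε hε0 hε1 hexp (c 1) (c 2)
      (hproper 1) (hproper 2) (hbalanced 1) (hbalanced 2)
      (fun π => hcon 1 2 (by decide) π)
  have e1 : σ02 = σ01 := by
    by_contra hne
    have hx := hA2 σ02 hne
    linarith
  have e2' : σ12 = τ01 := by
    by_contra hne
    have hx := hB2 σ12 hne
    linarith
  have e3 : τ12 = τ02 := by
    by_contra hne
    have hx := hD2 τ12 hne
    linarith
  rw [e1] at hI02
  rw [e2', e3] at hI12
  set X : Finset V := univ.filter (fun u : V => c 0 u = σ01) with hX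
  set Y : Finset V := univ.filter (fun u : V => c 1 u = τ01) with hY
  set Z : Finset V := univ.filter (fun u : V => c 2 u = τ02) with hZ
  have hXY : X ∩ Y = univ.filter (fun u : V => c 0 u = σ01 ∧ c 1 u = τ01) := by
    rw [hX, hY, ← Finset.filter_and]
  have hXZ : X ∩ Z = univ.filter (fun u : V => c 0 u = σ01 ∧ c 2 u = τ02) := by
    rw [hX, hZ, ← Finset.filter_and]
  have hYZ : Y ∩ Z = univ.filter (fun u : V => c 1 u = τ01 ∧ c 2 u = τ02) := by
    rw [hY, hZ, ← Finset.filter_and]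
  have hI01' : ((X ∩ Y).card : ℝ) ≤ 8*ε*n := by rw [hXY]; exact hI01
  have hI02' : ((X ∩ Z).card : ℝ) ≤ 8*ε*n := by rw [hXZ]; exact hI02
  have hI12' : ((Y ∩ Z).card : ℝ) ≤ 8*ε*n := by rw [hYZ]; exact hI12
  have hu : ((X ∪ Y ∪ Z).card : ℝ) ≤ n := by
    have h' : (X ∪ Y ∪ Z).card ≤ Fintype.card V := by
      rw [← Finset.card_univ]; exact Finset.card_le_card (Finset.subset_univ _)
    rw [← hn] at h'
    exact_mod_cast h'
  have c1q : ((X ∪ Y).card : ℝ) + ((X ∩ Y).card : ℝ) = (X.card : ℝ) + Y.card := by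
    exact_mod_cast Finset.card_union_add_card_inter X Y
  have c2q : (((X ∪ Y) ∪ Z).card : ℝ) + (((X ∪ Y) ∩ Z).card : ℝ)
      = ((X ∪ Y).card : ℝ) + Z.card := by
    exact_mod_cast Finset.card_union_add_card_inter (X ∪ Y) Z
  have c3q : (((X ∪ Y) ∩ Z).card : ℝ) ≤ ((X ∩ Z).card : ℝ) + ((Y ∩ Z).card : ℝ) := by
    have h' : ((X ∪ Y) ∩ Z).card ≤ (X ∩ Z).card + (Y ∩ Z).card := by
      rw [Finset.union_inter_distrib_right]
      exact Finset.card_union_le _ _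
    exact_mod_cast h'
  linarith [hA1, hB1, hD1]
end
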